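/- Let L ⊆ WM(A) be a VPL with syntactic morphism η. For u in the completion of WM(A), u lies in the topological closure of L if and only if η̂(u) ∈ η(L), where η̂ is the continuous extension of η; moreover this is equivalent to φ̂(u) ∈ φ(L) for every morphism φ onto a finite Ext-algebra, and to φ̂(u) ∈ φ(L) for some morphism φ onto a finite Ext-algebra recognising L. -/

import Mathlib

inductive VPKind : Type
  | call | ret | intern
deriving DecidableEq

class VPAlphabet (A : Type) where
  kind : A → VPKind

variable {A : Type} [VPAlphabet A]

inductive WellMatched : List A → Prop
  | nil : WellMatched []
  | intern (c : A) (hc : VPAlphabet.kind c = VPKind.intern) : WellMatched [c]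
  | ext (a b : A) (w : List A) (ha : VPAlphabet.kind a = VPKind.call)
      (hb : VPAlphabet.kind b = VPKind.ret) (hw : WellMatched w) :
      WellMatched (a :: w ++ [b])
  | append (u v : List A) (hu : WellMatched u) (hv : WellMatched v) : WellMatched (u ++ v)

theorem wm_insert {u v x : List A} (h : WellMatched (u ++ v)) (hx : WellMatched x) :
    WellMatched (u ++ x ++ v) := by
  suffices H : ∀ w, WellMatched w → ∀ u' v' : List A, w = u' ++ v' →
      WellMatched (u' ++ x ++ v') from H _ h u v rfl
  intro w hw
  induction hw with
  | nil =>
    intro u' v' huv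
    obtain ⟨rfl, rfl⟩ := List.append_eq_nil_iff.mp huv.symm
    simpa using hx
  | intern c hc =>
    intro u' v' huv
    rcases u' with _ | ⟨a, u''⟩
    · simp only [List.nil_append] at huv
      subst huv
      simpa using WellMatched.append x [c] hx (WellMatched.intern c hc)
    · have h1 : c = a := by injection huv
      have h2 : ([] : List A) = u'' ++ v' := by injection huv
      obtain ⟨rfl, rfl⟩ := List.append_eq_nil_iff.mp h2.symm
      subst h1
      simpa using WellMatched.append [c] x (WellMatched.intern c hc) hx
  | ext a b w' ha hb hw' ih =>
    intro u' v' huv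
    rcases u' with _ | ⟨a'', u''⟩
    · simp only [List.nil_append] at huv
      subst huv
      simpa using WellMatched.append x _ hx (WellMatched.ext a b w' ha hb hw')
    · have h1 : a = a'' := by injection huv
      have huv2 : w' ++ [b] = u'' ++ v' := by injection huv
      subst h1
      rcases List.eq_nil_or_concat v' with rfl | ⟨v'', b'', rfl⟩
      · have h3 : u'' = w' ++ [b] := by simpa using huv2.symm
        subst h3
        simpa using WellMatched.append _ x (WellMatched.ext a b w' ha hb hw') hx
      · have h4 : w' = u'' ++ v'' ∧ [b] = [b''] :=
          List.append_inj' (by simpa [List.append_assoc] using huv2) rfl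
        obtain ⟨rfl, hb'⟩ := h4
        have hbb : b = b'' := by injection hb'
        subst hbb
        have := WellMatched.ext a b _ ha hb (ih u'' v'' rfl)
        simpa [List.append_assoc] using this
  | append w₁ w₂ h₁ h₂ ih₁ ih₂ =>
    intro u' v' huv
    rcases List.append_eq_append_iff.mp huv with ⟨a', rfl, rfl⟩ | ⟨c', rfl, rfl⟩
    · have := WellMatched.append _ _ h₁ (ih₂ a' v' rfl)
      simpa [List.append_assoc] using this
    · have := WellMatched.append _ _ (ih₁ u' c' rfl) h₂
      simpa [List.append_assoc] using this

def WM (A : Type) [VPAlphabet A] : Type := {w : List A // WellMatched w}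

instance : Monoid (WM A) where
  one := ⟨[], WellMatched.nil⟩
  mul u v := ⟨u.1 ++ v.1, WellMatched.append _ _ u.2 v.2⟩
  mul_assoc a b c := Subtype.ext (List.append_assoc _ _ _)
  one_mul a := Subtype.ext (List.nil_append _)
  mul_one a := Subtype.ext (List.append_nil _)

@[simp] theorem WM.mul_val (x y : WM A) : (x * y).1 = x.1 ++ y.1 := rfl
@[simp] theorem WM.one_val : (1 : WM A).1 = [] := rfl

instance : Nonempty (WM A) := ⟨1⟩

def extWord (u v : List A) (h : WellMatched (u ++ v)) (x : WM A) : WM A :=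
  ⟨u ++ x.1 ++ v, wm_insert h x.2⟩

@[simp] theorem extWord_val (u v : List A) (h : WellMatched (u ++ v)) (x : WM A) :
    (extWord u v h x).1 = u ++ x.1 ++ v := rfl

structure ExtAlgebra (R : Type*) [Monoid R] where
  O : Submonoid (Function.End R)
  mulLeft_mem : ∀ r : R, (fun x => r * x) ∈ O
  mulRight_mem : ∀ r : R, (fun x => x * r) ∈ O

structure ExtAlgHom {R S : Type*} [Monoid R] [Monoid S]
    (ER : ExtAlgebra R) (ES : ExtAlgebra S) where
  toMonoidHom : R →* S
  opMap : ER.O →* ES.O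
  compat : ∀ (e : ER.O) (r : R),
    (opMap e : Function.End S) (toMonoidHom r) = toMonoidHom ((e : Function.End R) r)

/-- A morphism of `Ext`-algebras from the free `Ext`-algebra of well-matched words
into an `Ext`-algebra `R`, given by its monoid part and by the images of the
operations `ext_{u,v}`. -/
structure ExtHomWM (A : Type) [VPAlphabet A] {R : Type*} [Monoid R] (ER : ExtAlgebra R) where
  toMonoidHom : WM A →* R
  op : ∀ u v : List A, WellMatched (u ++ v) → ER.O
  op_one : op [] [] WellMatched.nil = 1
  op_comp : ∀ u v (h : WellMatched (u ++ v)) u' v' (h' : WellMatched (u' ++ v'))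
      (h'' : WellMatched ((u ++ u') ++ (v' ++ v))),
      op (u ++ u') (v' ++ v) h'' = op u v h * op u' v' h'
  op_spec : ∀ u v (h : WellMatched (u ++ v)) (x : WM A),
      (op u v h : Function.End R) (toMonoidHom x) = toMonoidHom (extWord u v h x)

/-- `R` recognises `L` via the morphism `φ` when `L` is the preimage of its image. -/
def Recognises {R : Type*} [Monoid R] {ER : ExtAlgebra R}
    (φ : ExtHomWM A ER) (L : Set (WM A)) : Prop :=
  L = φ.toMonoidHom ⁻¹' (φ.toMonoidHom '' L)

/-- The free `Ext`-algebra structure on the monoid of well-matched words. -/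
def freeExt (A : Type) [VPAlphabet A] : ExtAlgebra (WM A) where
  O :=
    { carrier := {e | ∃ u v, ∃ h : WellMatched (u ++ v), ∀ x : WM A, e x = extWord u v h x}
      one_mem' := ⟨[], [], WellMatched.nil, fun x => Subtype.ext (by show x.1 = [] ++ x.1 ++ []; simp)⟩
      mul_mem' := by
        rintro e f ⟨u, v, h, he⟩ ⟨u', v', h', hf⟩
        have h'' : WellMatched ((u ++ u') ++ (v' ++ v)) := by
          simpa [List.append_assoc] using wm_insert h h'
        exact ⟨u ++ u', v' ++ v, h'', fun x => by
          rw [show (e * f) x = e (f x) from rfl, hf, he]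
          exact Subtype.ext (by simp [List.append_assoc])⟩ }
  mulLeft_mem r := ⟨r.1, [], by simpa using r.2, fun x => Subtype.ext (by simp)⟩
  mulRight_mem r := ⟨[], r.1, by simpa using r.2, fun x => Subtype.ext (by simp)⟩

/-- A sub-`Ext`-algebra of an `Ext`-algebra. -/
structure SubExt {S : Type*} [Monoid S] (ES : ExtAlgebra S) where
  carrier : Submonoid S
  ops : Submonoid (Function.End S)
  ops_le : ops ≤ ES.O
  maps_to : ∀ e ∈ ops, ∀ x ∈ carrier, e x ∈ carrier
  mulLeft_mem : ∀ r ∈ carrier, (fun x => r * x) ∈ ops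
  mulRight_mem : ∀ r ∈ carrier, (fun x => x * r) ∈ ops

/-- The `Ext`-algebra structure induced on a sub-`Ext`-algebra. -/
def SubExt.toExtAlgebra {S : Type*} [Monoid S] {ES : ExtAlgebra S} (T : SubExt ES) :
    ExtAlgebra T.carrier where
  O :=
    { carrier := {e : Function.End T.carrier | ∃ f ∈ T.ops, ∀ x : T.carrier, (e x : S) = f x}
      one_mem' := ⟨1, T.ops.one_mem, fun _ => rfl⟩
      mul_mem' := by
        rintro e e' ⟨f, hf, he⟩ ⟨f', hf', he'⟩
        exact ⟨f * f', mul_mem hf hf', fun x => by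
          rw [show (e * e') x = e (e' x) from rfl, show (f * f') (x : S) = f (f' x) from rfl,
            ← he', he]⟩ }
  mulLeft_mem r := ⟨fun x => (r : S) * x, T.mulLeft_mem r r.2, fun _ => rfl⟩
  mulRight_mem r := ⟨fun x => x * (r : S), T.mulRight_mem r r.2, fun _ => rfl⟩

/-- `ER` is a quotient of `ES` if there is a surjective morphism of `Ext`-algebras
from `ES` onto `ER`. -/
def IsQuotientOf {R S : Type*} [Monoid R] [Monoid S]
    (ER : ExtAlgebra R) (ES : ExtAlgebra S) : Prop :=
  ∃ h : ExtAlgHom ES ER, Function.Surjective h.toMonoidHom ∧ Function.Surjective h.opMap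

/-- Bundled finite `Ext`-algebras. -/
structure BExt : Type 1 where
  carrier : Type
  [mon : Monoid carrier]
  [fin : Finite carrier]
  ext : ExtAlgebra carrier

attribute [instance] BExt.mon BExt.fin

section ListTake

variable {B : Type*}

theorem take_take_append (N k : ℕ) (hk : k ≤ N) (x v : List B) :
    ((x.take N) ++ v).take k = (x ++ v).take k := by
  rw [List.take_append, List.take_append, List.take_take,
    List.length_take]
  rw [min_eq_left hk]
  congr 2
  omega

theorem take_mid (N : ℕ) (u s v : List B) :
    (u ++ s.take N ++ v).take N = (u ++ s ++ v).take N := by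
  conv_lhs => rw [List.append_assoc, List.take_append]
  conv_rhs => rw [List.append_assoc, List.take_append]
  congr 1
  exact take_take_append N _ (Nat.sub_le _ _) s v

theorem take_append_right (N : ℕ) (u s : List B) :
    (u ++ s.take N).take N = (u ++ s).take N := by
  have := take_mid N u s ([] : List B)
  simpa using this

end ListTake

/-- The monoid of words of length at most `N`, with truncated concatenation. -/
def TruncM (B : Type) (N : ℕ) : Type := {l : List B // l.length ≤ N}

instance {B : Type} {N : ℕ} : Monoid (TruncM B N) where
  one := ⟨[], by simp⟩
  mul u v := ⟨(u.1 ++ v.1).take N, by rw [List.length_take]; exact min_le_left _ _⟩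
  mul_assoc a b c := Subtype.ext (by
    show ((a.1 ++ b.1).take N ++ c.1).take N = (a.1 ++ (b.1 ++ c.1).take N).take N
    rw [take_take_append N N le_rfl, take_append_right, List.append_assoc])
  one_mul a := Subtype.ext (by
    show (([] : List B) ++ a.1).take N = a.1
    rw [List.nil_append]
    exact List.take_of_length_le a.2)
  mul_one a := Subtype.ext (by
    show (a.1 ++ ([] : List B)).take N = a.1
    rw [List.append_nil]
    exact List.take_of_length_le a.2)

@[simp] theorem TruncM.one_val {B : Type} {N : ℕ} : (1 : TruncM B N).1 = [] := rfl
@[simp] theorem TruncM.mul_val {B : Type} {N : ℕ} (u v : TruncM B N) :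
    (u * v).1 = (u.1 ++ v.1).take N := rfl

instance {B : Type} [Finite B] {N : ℕ} : Finite (TruncM B N) := by
  haveI : Finite (Option B) := Finite.of_equiv (B ⊕ (PUnit : Type)) (Equiv.optionEquivSumPUnit B).symm
  refine Finite.of_injective
    (fun l : TruncM B N => fun i : Fin (N + 1) => l.1[(i : ℕ)]?) ?_
  intro a b hab
  apply Subtype.ext
  apply List.ext_getElem?
  intro i
  by_cases hi : i < N + 1
  · exact congrFun hab ⟨i, hi⟩
  · have ha := a.2
    have hb := b.2
    rw [List.getElem?_eq_none (by omega), List.getElem?_eq_none (by omega)]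

/-- Truncation is a monoid morphism on well-matched words. -/
def truncMonoidHom (A : Type) [VPAlphabet A] (N : ℕ) : WM A →* TruncM A N where
  toFun w := ⟨w.1.take N, by rw [List.length_take]; exact min_le_left _ _⟩
  map_one' := Subtype.ext (by simp)
  map_mul' u v := Subtype.ext (by
    show (u.1 ++ v.1).take N = (u.1.take N ++ v.1.take N).take N
    rw [take_take_append N N le_rfl, take_append_right])

/-- The truncation monoid as an `Ext`-algebra with all functions as operations. -/
def truncExt (A : Type) [VPAlphabet A] (N : ℕ) : ExtAlgebra (TruncM A N) where
  O := ⊤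
  mulLeft_mem _ := trivial
  mulRight_mem _ := trivial

def truncOp {A : Type} [VPAlphabet A] {N : ℕ} (u v : List A) : Function.End (TruncM A N) :=
  fun m => ⟨(u ++ m.1 ++ v).take N, by rw [List.length_take]; exact min_le_left _ _⟩

/-- The truncation morphism of `Ext`-algebras. -/
def truncExtHom (A : Type) [VPAlphabet A] (N : ℕ) : ExtHomWM A (truncExt A N) where
  toMonoidHom := truncMonoidHom A N
  op u v _ := ⟨truncOp u v, trivial⟩
  op_one := by
    apply Subtype.ext
    funext m
    apply Subtype.ext
    show (([] : List A) ++ m.1 ++ []).take N = m.1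
    simpa using List.take_of_length_le m.2
  op_comp u v h u' v' h' h'' := by
    apply Subtype.ext
    funext m
    apply Subtype.ext
    show ((u ++ u') ++ m.1 ++ (v' ++ v)).take N = (u ++ ((u' ++ m.1 ++ v').take N) ++ v).take N
    rw [take_mid]
    simp [List.append_assoc]
  op_spec u v h x := by
    apply Subtype.ext
    show (u ++ (x.1.take N) ++ v).take N = (u ++ x.1 ++ v).take N
    exact take_mid N u x.1 v

/-- `x` and `y` can be separated by a finite `Ext`-algebra of cardinality at most `n`. -/
def SepBound (n : ℕ) (x y : WM A) : Prop :=
  ∃ (R : BExt) (φ : ExtHomWM A R.ext),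
    Nat.card R.carrier ≤ n ∧ φ.toMonoidHom x ≠ φ.toMonoidHom y

/-- The minimal cardinality of a finite `Ext`-algebra separating `x` and `y`. -/
noncomputable def sepDeg (x y : WM A) : ℕ := sInf {n | SepBound n x y}

/-- The profinite (ultra)metric on well-matched words. -/
noncomputable def pdist (x y : WM A) : ℝ :=
  open scoped Classical in if x = y then 0 else (2 : ℝ)⁻¹ ^ sepDeg x y

theorem pdist_nonneg (x y : WM A) : 0 ≤ pdist x y := by
  unfold pdist
  split
  · exact le_rfl
  · positivity

theorem sepBound_comm {n : ℕ} {x y : WM A} : SepBound n x y ↔ SepBound n y x := by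
  constructor <;> rintro ⟨R, φ, h1, h2⟩ <;> exact ⟨R, φ, h1, h2.symm⟩

theorem pdist_comm (x y : WM A) : pdist x y = pdist y x := by
  have h1 : sepDeg x y = sepDeg y x := by
    unfold sepDeg
    congr 1
    ext n
    exact sepBound_comm
  rcases eq_or_ne x y with rfl | h
  · rfl
  · unfold pdist
    rw [if_neg h, if_neg (Ne.symm h), h1]

theorem exists_sepBound [Finite A] {x y : WM A} (hxy : x ≠ y) : ∃ n, SepBound n x y := by
  classical
  set N := max x.1.length y.1.length with hN
  refine ⟨Nat.card (TruncM A N),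
    { carrier := TruncM A N, ext := truncExt A N }, truncExtHom A N, le_rfl, ?_⟩
  intro hcontra
  have hv : x.1.take N = y.1.take N := congrArg Subtype.val hcontra
  rw [List.take_of_length_le (le_max_left _ _ : x.1.length ≤ N),
    List.take_of_length_le (le_max_right _ _ : y.1.length ≤ N)] at hv
  exact hxy (Subtype.ext hv)

theorem pdist_ultra [Finite A] (x y z : WM A) :
    pdist x z ≤ max (pdist x y) (pdist y z) := by
  rcases eq_or_ne x z with rfl | hxz
  · calc pdist x x = 0 := by simp [pdist]
      _ ≤ _ := le_max_of_le_left (pdist_nonneg _ _)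
  rcases eq_or_ne x y with rfl | hxy
  · exact le_max_of_le_right le_rfl
  rcases eq_or_ne y z with rfl | hyz
  · exact le_max_of_le_left le_rfl
  have hSne : {n | SepBound n x z}.Nonempty := exists_sepBound hxz
  obtain ⟨R, φ, hcard, hne⟩ := Nat.sInf_mem hSne
  by_cases hxy' : φ.toMonoidHom x = φ.toMonoidHom y
  · have hb : SepBound (sepDeg x z) y z := ⟨R, φ, hcard, by rw [← hxy']; exact hne⟩
    have hle : sepDeg y z ≤ sepDeg x z := Nat.sInf_le hb
    calc pdist x z = (2 : ℝ)⁻¹ ^ sepDeg x z := by rw [pdist, if_neg hxz]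
      _ ≤ (2 : ℝ)⁻¹ ^ sepDeg y z := pow_le_pow_of_le_one (by norm_num) (by norm_num) hle
      _ = pdist y z := by rw [pdist, if_neg hyz]
      _ ≤ _ := le_max_right _ _
  · have hb : SepBound (sepDeg x z) x y := ⟨R, φ, hcard, hxy'⟩
    have hle : sepDeg x y ≤ sepDeg x z := Nat.sInf_le hb
    calc pdist x z = (2 : ℝ)⁻¹ ^ sepDeg x z := by rw [pdist, if_neg hxz]
      _ ≤ (2 : ℝ)⁻¹ ^ sepDeg x y := pow_le_pow_of_le_one (by norm_num) (by norm_num) hle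
      _ = pdist x y := by rw [pdist, if_neg hxy]
      _ ≤ _ := le_max_left _ _

noncomputable instance WM.metricSpace [Finite A] : MetricSpace (WM A) where
  dist := pdist
  dist_self x := by simp [pdist]
  dist_comm := pdist_comm
  dist_triangle x y z := by
    refine (pdist_ultra x y z).trans (max_le ?_ ?_)
    · exact le_add_of_nonneg_right (pdist_nonneg _ _)
    · exact le_add_of_nonneg_left (pdist_nonneg _ _)
  eq_of_dist_eq_zero := by
    intro x y h
    by_contra hxy
    have h' : pdist x y = 0 := h
    rw [pdist, if_neg hxy] at h'
    exact absurd h' (ne_of_gt (pow_pos (by norm_num) _))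

/-- The syntactic relation of a language of well-matched words. -/
def synRel (L : Set (WM A)) (x y : WM A) : Prop :=
  ∀ u v (h : WellMatched (u ++ v)), (extWord u v h x ∈ L ↔ extWord u v h y ∈ L)

theorem synRel_equivalence (L : Set (WM A)) : Equivalence (synRel L) :=
  ⟨fun _ _ _ _ => Iff.rfl, fun h u v hw => (h u v hw).symm,
    fun h h' u v hw => (h u v hw).trans (h' u v hw)⟩

theorem synRel_ext {L : Set (WM A)} {x y : WM A} (hxy : synRel L x y)
    (u v : List A) (h : WellMatched (u ++ v)) :
    synRel L (extWord u v h x) (extWord u v h y) := by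
  intro s t hst
  have h1 : WellMatched ((s ++ u) ++ (v ++ t)) := by
    simpa [List.append_assoc] using wm_insert hst h
  have e1 : extWord s t hst (extWord u v h x) = extWord (s ++ u) (v ++ t) h1 x :=
    Subtype.ext (by simp [List.append_assoc])
  have e2 : extWord s t hst (extWord u v h y) = extWord (s ++ u) (v ++ t) h1 y :=
    Subtype.ext (by simp [List.append_assoc])
  rw [e1, e2]
  exact hxy (s ++ u) (v ++ t) h1

theorem synRel_mul {L : Set (WM A)} {x x' y y' : WM A}
    (hx : synRel L x x') (hy : synRel L y y') : synRel L (x * y) (x' * y') := by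
  intro u v h
  have hv1 : WellMatched (u ++ (y.1 ++ v)) := by
    simpa [List.append_assoc] using wm_insert h y.2
  have hv2 : WellMatched ((u ++ x'.1) ++ v) := by
    simpa [List.append_assoc] using wm_insert h x'.2
  have e1 : extWord u v h (x * y) = extWord u (y.1 ++ v) hv1 x :=
    Subtype.ext (by simp [List.append_assoc])
  have e2 : extWord u (y.1 ++ v) hv1 x' = extWord (u ++ x'.1) v hv2 y :=
    Subtype.ext (by simp [List.append_assoc])
  have e3 : extWord u v h (x' * y') = extWord (u ++ x'.1) v hv2 y' :=
    Subtype.ext (by simp [List.append_assoc])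
  rw [e1, e3]
  exact (hx u _ hv1).trans (by rw [e2]; exact hy _ v hv2)

/-- The syntactic congruence of `L` on the monoid of well-matched words. -/
def synCon (L : Set (WM A)) : Con (WM A) where
  r := synRel L
  iseqv := synRel_equivalence L
  mul' := synRel_mul

/-- The operations of the syntactic `Ext`-algebra of `L`. -/
def synO (L : Set (WM A)) : Submonoid (Function.End (synCon L).Quotient) where
  carrier := {e | ∃ u v, ∃ h : WellMatched (u ++ v),
    ∀ x : WM A, e ((synCon L).mk' x) = (synCon L).mk' (extWord u v h x)}
  one_mem' := ⟨[], [], WellMatched.nil, fun x => by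
    show (synCon L).mk' x = _
    congr 1
    exact Subtype.ext (by simp)⟩
  mul_mem' := by
    rintro e f ⟨u, v, h, he⟩ ⟨u', v', h', hf⟩
    have h'' : WellMatched ((u ++ u') ++ (v' ++ v)) := by
      simpa [List.append_assoc] using wm_insert h h'
    refine ⟨u ++ u', v' ++ v, h'', fun x => ?_⟩
    rw [show (e * f) ((synCon L).mk' x) = e (f ((synCon L).mk' x)) from rfl, hf, he]
    congr 1
    exact Subtype.ext (by simp [List.append_assoc])

/-- The syntactic `Ext`-algebra of a language of well-matched words. -/
def synExt (L : Set (WM A)) : ExtAlgebra (synCon L).Quotient where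
  O := synO L
  mulLeft_mem q := by
    obtain ⟨w, rfl⟩ := Con.mk'_surjective q
    refine ⟨w.1, [], by simpa using w.2, fun x => ?_⟩
    show (synCon L).mk' w * (synCon L).mk' x = _
    rw [← map_mul]
    congr 1
    exact Subtype.ext (by simp)
  mulRight_mem q := by
    obtain ⟨w, rfl⟩ := Con.mk'_surjective q
    refine ⟨[], w.1, by simpa using w.2, fun x => ?_⟩
    show (synCon L).mk' x * (synCon L).mk' w = _
    rw [← map_mul]
    exact congrArg _ (Subtype.ext (by simp))

/-! ### Visibly pushdown automata -/

structure VPA (A : Type) [VPAlphabet A] where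
  Q : Type
  [finQ : Finite Q]
  q0 : Q
  Γ : Type
  [finΓ : Finite Γ]
  bot : Γ
  δ : A → Q → Γ → Q × List Γ
  F : Set Q
  call_spec : ∀ a q G, VPAlphabet.kind a = VPKind.call → ∃ G', (δ a q G).2 = [G', G]
  ret_spec : ∀ a q G, VPAlphabet.kind a = VPKind.ret → (δ a q G).2 = []
  int_spec : ∀ a q G, VPAlphabet.kind a = VPKind.intern → (δ a q G).2 = [G]

attribute [instance] VPA.finQ VPA.finΓ

def VPA.runAux (M : VPA A) : List A → M.Q → List M.Γ → M.Q × List M.Γ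
  | [], q, s => (q, s)
  | _ :: w, q, [] => M.runAux w q []
  | a :: w, q, G :: s => M.runAux w (M.δ a q G).1 ((M.δ a q G).2 ++ s)

def VPA.Accepts (M : VPA A) (w : List A) : Prop :=
  (M.runAux w M.q0 [M.bot]).1 ∈ M.F ∧ (M.runAux w M.q0 [M.bot]).2 = [M.bot]

/-- The language of well-matched words accepted by a VPA. -/
def VPA.lang (M : VPA A) : Set (WM A) := {w | M.Accepts w.1}

/-- `L` is a visibly pushdown language: it is accepted by a visibly pushdown automaton. -/
def IsVPL (L : Set (WM A)) : Prop := ∃ M : VPA A, L = M.lang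

/-!
The syntactic congruence of a VPL is coarser than equality of the maps `Q × Γ → Q` that
well-matched words induce on a VPA accepting it, so the syntactic `Ext`-algebra is finite.
A morphism onto a finite `Ext`-algebra of cardinality `n` is constant on balls of radius `2⁻ⁿ`
of the profinite metric, hence extends to a continuous map `ψ` from the completion into the
discrete algebra. Then `ψ⁻¹(φ(L))` is clopen and contains `L`, so it contains the closure of `L`;
when `φ` recognises `L`, this clopen set meets the dense set of words exactly in `L`, so it is
the closure of `L`.
-/

namespace VPA

variable (M : VPA A)

theorem runAux_append (u v : List A) (q : M.Q) (s : List M.Γ) :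
    M.runAux (u ++ v) q s = M.runAux v (M.runAux u q s).1 (M.runAux u q s).2 := by
  induction u generalizing q s with
  | nil => rfl
  | cons a u ih =>
    cases s with
    | nil => simpa [runAux] using ih q []
    | cons G s => simp [runAux, ih]

theorem runAux_nil_stack (w : List A) (q : M.Q) : M.runAux w q [] = (q, []) := by
  induction w with
  | nil => rfl
  | cons a w ih => simpa [runAux] using ih

theorem runAux_of_wellMatched {w : List A} (hw : WellMatched w) (q : M.Q) (G : M.Γ)
    (s : List M.Γ) : M.runAux w q (G :: s) = ((M.runAux w q [G]).1, G :: s) := by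
  induction hw generalizing q G s with
  | nil => rfl
  | intern c hc => simp [runAux, M.int_spec c q G hc]
  | ext a b _ ha hb _ ih =>
    obtain ⟨G', hG'⟩ := M.call_spec a q G ha
    simp only [List.cons_append, runAux, hG', List.nil_append]
    rw [runAux_append, runAux_append, ih _ G' (G :: s), ih _ G' [G]]
    simp [runAux, M.ret_spec b _ G' hb]
  | append _ _ _ _ ihu ihv => rw [runAux_append, runAux_append, ihu, ihu, ihv, ihv]

def behaviour (x : WM A) : M.Q × M.Γ → M.Q := fun p => (M.runAux x.1 p.1 [p.2]).1

theorem runAux_eq_of_behaviour_eq {x y : WM A} (h : M.behaviour x = M.behaviour y)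
    (q : M.Q) (s : List M.Γ) : M.runAux x.1 q s = M.runAux y.1 q s := by
  cases s with
  | nil => rw [runAux_nil_stack, runAux_nil_stack]
  | cons G s =>
    rw [runAux_of_wellMatched M x.2, runAux_of_wellMatched M y.2]
    exact congrArg (·, G :: s) (congrFun h (q, G))

theorem synRel_of_behaviour_eq {x y : WM A} (h : M.behaviour x = M.behaviour y) :
    synRel M.lang x y := by
  intro u v _
  have hrun : M.runAux (u ++ x.1 ++ v) M.q0 [M.bot] = M.runAux (u ++ y.1 ++ v) M.q0 [M.bot] := by
    simp only [runAux_append, M.runAux_eq_of_behaviour_eq h]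
  show M.Accepts (u ++ x.1 ++ v) ↔ M.Accepts (u ++ y.1 ++ v)
  rw [Accepts, Accepts, hrun]

theorem finite_synCon_quotient : Finite (synCon M.lang).Quotient :=
  have : Finite (Quotient (Setoid.ker M.behaviour)) :=
    Finite.of_injective _ (Setoid.kerLift_injective M.behaviour)
  Finite.of_surjective _ (Quotient.map_surjective (f := id)
    (fun _ _ h => M.synRel_of_behaviour_eq (Setoid.ker_def.1 h)) Function.surjective_id)

end VPA

section Syntactic

variable (L : Set (WM A))

/-- The syntactic morphism, `η` in the paper. -/
def synHom : ExtHomWM A (synExt L) where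
  toMonoidHom := (synCon L).mk'
  op u v h := ⟨fun q => q.liftOn (fun x => (synCon L).mk' (extWord u v h x))
    (fun _ _ hxy => (synCon L).eq.2 (synRel_ext hxy u v h)), u, v, h, fun _ => rfl⟩
  op_one := by
    refine Subtype.ext (funext fun q => Con.induction_on q fun _ => ?_)
    exact congrArg (synCon L).mk' (Subtype.ext (by simp))
  op_comp _ _ _ _ _ _ _ := by
    refine Subtype.ext (funext fun q => Con.induction_on q fun _ => ?_)
    exact congrArg (synCon L).mk' (Subtype.ext (by simp [List.append_assoc]))
  op_spec _ _ _ _ := rfl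

theorem synHom_recognises : Recognises (synHom L) L := by
  refine Set.Subset.antisymm (fun x hx => ⟨x, hx, rfl⟩) ?_
  rintro x ⟨w, hw, hwx⟩
  have hctx := (synCon L).eq.1 hwx [] [] WellMatched.nil
  have hw1 : extWord [] [] WellMatched.nil w = w := Subtype.ext (by simp)
  have hx1 : extWord [] [] WellMatched.nil x = x := Subtype.ext (by simp)
  rw [hw1, hx1] at hctx
  exact hctx.1 hw

def synBExt [Finite (synCon L).Quotient] : BExt where
  carrier := (synCon L).Quotient
  ext := synExt L

end Syntactic

section DiscreteTarget

variable {X Y T : Type*}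

theorem UniformSpace.Completion.exists_continuous_extension_of_ker_mem_uniformity
    [UniformSpace X] {g : X → T} (hg : {p : X × X | g p.1 = g p.2} ∈ uniformity X) :
    ∃ ψ : Completion X → T, @Continuous _ _ _ ⊥ ψ ∧ ∀ x : X, ψ x = g x := by
  let _ : UniformSpace T := ⊥
  have hg' : UniformContinuous g := by
    rw [UniformContinuous, DiscreteUniformity.eq_principal_setRelId T, Filter.tendsto_principal]
    exact Filter.mem_of_superset hg fun p hp => hp
  exact ⟨Completion.extension g, Completion.continuous_extension, Completion.extension_coe hg'⟩

variable [TopologicalSpace Y] {i : X → Y} {g : X → T} {ψ : Y → T} {L : Set X} {u : Y}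

theorem mem_image_of_mem_closure_image (hψ : @Continuous _ _ _ ⊥ ψ)
    (hψi : ∀ x, ψ (i x) = g x) (hu : u ∈ closure (i '' L)) : ψ u ∈ g '' L := by
  let _ : TopologicalSpace T := ⊥
  have : DiscreteTopology T := ⟨rfl⟩
  refine closure_minimal (t := ψ ⁻¹' (g '' L)) ?_ ((isClosed_discrete _).preimage hψ) hu
  rintro _ ⟨x, hx, rfl⟩
  exact ⟨x, hx, (hψi x).symm⟩

theorem mem_closure_image_iff_of_saturated (hψ : @Continuous _ _ _ ⊥ ψ)
    (hψi : ∀ x, ψ (i x) = g x) (hi : DenseRange i) (hL : L = g ⁻¹' (g '' L)) :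
    u ∈ closure (i '' L) ↔ ψ u ∈ g '' L := by
  refine ⟨mem_image_of_mem_closure_image hψ hψi, fun hu => ?_⟩
  let _ : TopologicalSpace T := ⊥
  have : DiscreteTopology T := ⟨rfl⟩
  have hopen : IsOpen (ψ ⁻¹' (g '' L)) := (isOpen_discrete _).preimage hψ
  have htrace : ψ ⁻¹' (g '' L) ∩ Set.range i ⊆ i '' L := by
    rintro _ ⟨hx, x, rfl⟩
    rw [Set.mem_preimage, hψi] at hx
    exact ⟨x, hL ▸ hx, rfl⟩
  exact closure_mono htrace (hi.open_subset_closure_inter hopen hu)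

end DiscreteTarget

section Profinite

open UniformSpace

variable [Finite A]

theorem ExtHomWM.eq_of_dist_lt {R : BExt} (φ : ExtHomWM A R.ext) {x y : WM A}
    (h : dist x y < (2 : ℝ)⁻¹ ^ Nat.card R.carrier) : φ.toMonoidHom x = φ.toMonoidHom y := by
  by_contra hne
  have hxy : x ≠ y := fun h => hne (h ▸ rfl)
  have hdeg : sepDeg x y ≤ Nat.card R.carrier := Nat.sInf_le ⟨R, φ, le_rfl, hne⟩
  have hdist : dist x y = (2 : ℝ)⁻¹ ^ sepDeg x y := if_neg hxy
  rw [hdist] at h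
  exact h.not_ge (pow_le_pow_of_le_one (by norm_num) (by norm_num) hdeg)

theorem ExtHomWM.exists_continuous_extension {R : BExt} (φ : ExtHomWM A R.ext) :
    ∃ ψ : Completion (WM A) → R.carrier,
      @Continuous _ _ _ ⊥ ψ ∧ ∀ x : WM A, ψ x = φ.toMonoidHom x :=
  Completion.exists_continuous_extension_of_ker_mem_uniformity <|
    Metric.mem_uniformity_dist.2 ⟨(2 : ℝ)⁻¹ ^ Nat.card R.carrier, by positivity,
      fun _ _ => φ.eq_of_dist_lt⟩

end Profinite

open UniformSpace in
/-- For a VPL `L` and `u` in the completion: `u` lies in the closure of `L` iff the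
extended syntactic morphism maps it into `η(L)`, iff every continuous extension of a
surjective morphism onto a finite `Ext`-algebra maps it into `φ(L)`, iff some
recognising morphism does. -/
theorem statement16 {A : Type} [VPAlphabet A] [Finite A] (L : Set (WM A))
    (hL : IsVPL L) (u : Completion (WM A)) :
    ((u ∈ closure ((fun w : WM A => (w : Completion (WM A))) '' L)) ↔
      (∀ ψ : Completion (WM A) → (synCon L).Quotient,
        (@Continuous _ _ _ ⊥ ψ ∧ ∀ x : WM A, ψ ↑x = (synCon L).mk' x) →
        ψ u ∈ (synCon L).mk' '' L)) ∧
    ((u ∈ closure ((fun w : WM A => (w : Completion (WM A))) '' L)) ↔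
      (∀ (R : BExt) (φ : ExtHomWM A R.ext), Function.Surjective φ.toMonoidHom →
        ∀ ψ : Completion (WM A) → R.carrier,
          (@Continuous _ _ _ ⊥ ψ ∧ ∀ x : WM A, ψ ↑x = φ.toMonoidHom x) →
          ψ u ∈ φ.toMonoidHom '' L)) ∧
    ((u ∈ closure ((fun w : WM A => (w : Completion (WM A))) '' L)) ↔
      (∃ (R : BExt) (φ : ExtHomWM A R.ext), Function.Surjective φ.toMonoidHom ∧
        Recognises φ L ∧
        ∃ ψ : Completion (WM A) → R.carrier,
          (@Continuous _ _ _ ⊥ ψ ∧ ∀ x : WM A, ψ ↑x = φ.toMonoidHom x) ∧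
          ψ u ∈ φ.toMonoidHom '' L)) := by
  obtain ⟨M, rfl⟩ := hL
  have := M.finite_synCon_quotient
  have hdense := Completion.denseRange_coe (α := WM A)
  obtain ⟨ψ₀, hψ₀, hψ₀η⟩ := (synHom M.lang).exists_continuous_extension (R := synBExt M.lang)
  have hη := mem_closure_image_iff_of_saturated (u := u) hψ₀ hψ₀η hdense (synHom_recognises _)
  refine ⟨⟨fun hu ψ hψ => mem_image_of_mem_closure_image hψ.1 hψ.2 hu,
      fun h => hη.2 (h ψ₀ ⟨hψ₀, hψ₀η⟩)⟩,
    ⟨fun hu R φ _ ψ hψ => mem_image_of_mem_closure_image hψ.1 hψ.2 hu,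
      fun h => hη.2 (h (synBExt _) (synHom _) Con.mk'_surjective ψ₀ ⟨hψ₀, hψ₀η⟩)⟩,
    ⟨fun hu => ⟨synBExt _, synHom _, Con.mk'_surjective, synHom_recognises _, ψ₀,
      ⟨hψ₀, hψ₀η⟩, hη.1 hu⟩, ?_⟩⟩
  rintro ⟨R, φ, -, hφL, ψ, ⟨hψ, hψφ⟩, hu⟩
  exact (mem_closure_image_iff_of_saturated hψ hψφ hdense hφL).2 hu
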